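/- arXiv:1110.0966 — 2 statements merged into one kernel-verified Lean document; each statement's English description precedes it below -/
import Mathlib

section
/- Assume that ⋂_{m∈ℕ} Φ^m(A) = {0} and let w ≥ 2 be an integer. Call the digit set D w-weak-subadditive if for all nonzero c, d ∈ D and all m, n ∈ ℕ with |m − n| ≠ w − 1 the element Φ^m(c) + Φ^n(d) is the value of some w-NAF-expansion of weight at most 2. If D is w-weak-subadditive, then every z ∈ A that is the value of some multi-expansion is the value of a (w−1)-NAF-expansion whose weight is at most the weight of every multi-expansion with value z. -/
/-! Among the multi-expansions of `z` of minimal weight choose one whose sum of positions is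
maximal: it exists because `⋂ Φ^m(A) = {0}` bounds the positions of the digits of a minimal
multi-expansion of a fixed element (some digit lies below any `N` with `z ∉ Φ^N(A)`, and one
recurses on the remaining digits). If two of its digits were at distance less than
`w - 1`, weak subadditivity would replace them by a `w`-NAF-expansion of the same value, shifted
so that its digits lie no lower; minimality forces that expansion to have weight `2`, and its
`w`-spacing then makes the sum of positions grow. Hence the digits are `(w - 1)`-spaced, in
particular at distinct positions, and form a `(w - 1)`-NAF-expansion. -/

/-- A multi-expansion over the digit set `D`: a finite multiset of pairs `(d, n)`
with `d ∈ D` nonzero. -/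
def IsMultiExpansion {A : Type*} [AddCommGroup A] (D : Finset A)
    (μ : Multiset (A × ℕ)) : Prop :=
  ∀ x ∈ μ, x.1 ∈ D ∧ x.1 ≠ 0

/-- The value of a multi-expansion: `∑ Φ^n(d)`. -/
def mvalue {A : Type*} [AddCommGroup A] (Φ : AddMonoid.End A)
    (μ : Multiset (A × ℕ)) : A :=
  (μ.map fun x => (Φ ^ x.2) x.1).sum

/-- An expansion: a finitely supported sequence of digits. -/
def IsExpansion {A : Type*} [AddCommGroup A] (D : Finset A) (η : ℕ →₀ A) : Prop :=
  ∀ n, η n ∈ D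

/-- The `w`-NAF condition: any two distinct nonzero digits have indices at
distance at least `w`. -/
def IsWNAF {A : Type*} [AddCommGroup A] (w : ℕ) (η : ℕ →₀ A) : Prop :=
  ∀ m n : ℕ, m ≠ n → η m ≠ 0 → η n ≠ 0 → (w : ℤ) ≤ |(m : ℤ) - (n : ℤ)|

/-- The value of an expansion: `∑ Φ^n(η_n)`. -/
def evalue {A : Type*} [AddCommGroup A] (Φ : AddMonoid.End A) (η : ℕ →₀ A) : A :=
  η.sum fun n d => (Φ ^ n) d

/-- The weight of an expansion: the number of nonzero digits. -/
def eweight {A : Type*} [AddCommGroup A] (η : ℕ →₀ A) : ℕ :=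
  η.support.card

/-- The digit set `D` is `w`-weak-subadditive: the sum of the values of two
singletons `(c, m)` and `(d, n)` with `|m - n| ≠ w - 1` has a `w`-NAF-expansion
of weight at most `2`. -/
def WWeakSubadditive {A : Type*} [AddCommGroup A] (Φ : AddMonoid.End A)
    (D : Finset A) (w : ℕ) : Prop :=
  ∀ c ∈ D, ∀ d ∈ D, c ≠ 0 → d ≠ 0 → ∀ m n : ℕ,
    ((m : ℤ) - (n : ℤ)).natAbs ≠ w - 1 →
    ∃ η : ℕ →₀ A, IsExpansion D η ∧ IsWNAF w η ∧
      evalue Φ η = (Φ ^ m) c + (Φ ^ n) d ∧ eweight η ≤ 2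

section PosSum

variable {α : Type*}

def posSum (s : Multiset (α × ℕ)) : ℕ := (s.map Prod.snd).sum

@[simp] lemma posSum_cons (p : α × ℕ) (s : Multiset (α × ℕ)) :
    posSum (p ::ₘ s) = p.2 + posSum s := by
  simp [posSum]

@[simp] lemma posSum_add (s t : Multiset (α × ℕ)) : posSum (s + t) = posSum s + posSum t := by
  simp [posSum]

end PosSum

section Multi

variable {A : Type*} [AddCommGroup A] (Φ : AddMonoid.End A) (D : Finset A)

lemma pow_add_apply (m n : ℕ) (x : A) : (Φ ^ (m + n)) x = (Φ ^ m) ((Φ ^ n) x) := by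
  rw [pow_add]; rfl

@[simp] lemma mvalue_zero : mvalue Φ 0 = 0 := by simp [mvalue]

@[simp] lemma mvalue_cons (p : A × ℕ) (s : Multiset (A × ℕ)) :
    mvalue Φ (p ::ₘ s) = (Φ ^ p.2) p.1 + mvalue Φ s := by
  simp [mvalue]

@[simp] lemma mvalue_add (s t : Multiset (A × ℕ)) :
    mvalue Φ (s + t) = mvalue Φ s + mvalue Φ t := by
  simp [mvalue]

lemma mvalue_mem_range_pow {s : Multiset (A × ℕ)} {N : ℕ} (h : ∀ p ∈ s, N ≤ p.2) :
    mvalue Φ s ∈ Set.range (Φ ^ N) := by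
  induction s using Multiset.induction_on with
  | empty => exact ⟨0, by simp⟩
  | cons p s ih =>
    obtain ⟨b, hb⟩ := ih fun q hq => h q (Multiset.mem_cons_of_mem hq)
    obtain ⟨t, ht⟩ := Nat.exists_eq_add_of_le (h p (Multiset.mem_cons_self p s))
    exact ⟨(Φ ^ t) p.1 + b, by rw [map_add, hb, mvalue_cons, ht, pow_add_apply]⟩

def IsOptimal (μ : Multiset (A × ℕ)) : Prop :=
  IsMultiExpansion D μ ∧ ∀ ρ, IsMultiExpansion D ρ → mvalue Φ ρ = mvalue Φ μ →
    Multiset.card μ ≤ Multiset.card ρ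

variable {Φ D}

lemma IsMultiExpansion.of_le {s t : Multiset (A × ℕ)} (ht : IsMultiExpansion D t) (h : s ≤ t) :
    IsMultiExpansion D s :=
  fun p hp => ht p (Multiset.mem_of_le h hp)

lemma IsOptimal.of_cons {p : A × ℕ} {s : Multiset (A × ℕ)} (h : IsOptimal Φ D (p ::ₘ s)) :
    IsOptimal Φ D s := by
  refine ⟨h.1.of_le (Multiset.le_cons_self s p), fun ρ hρ hv => ?_⟩
  have hpρ : IsMultiExpansion D (p ::ₘ ρ) := by
    intro q hq
    rcases Multiset.mem_cons.1 hq with rfl | hq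
    exacts [h.1 q (Multiset.mem_cons_self q s), hρ q hq]
  simpa using h.2 (p ::ₘ ρ) hpρ (by simp [hv])

lemma IsOptimal.card_eq {μ ν : Multiset (A × ℕ)} (hμ : IsOptimal Φ D μ) (hν : IsOptimal Φ D ν)
    (h : mvalue Φ μ = mvalue Φ ν) : Multiset.card μ = Multiset.card ν :=
  le_antisymm (hμ.2 ν hν.1 h.symm) (hν.2 μ hμ.1 h)

lemma IsOptimal.of_card_le {μ ν : Multiset (A × ℕ)} (hμ : IsOptimal Φ D μ)
    (hν : IsMultiExpansion D ν) (hv : mvalue Φ ν = mvalue Φ μ)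
    (hc : Multiset.card ν ≤ Multiset.card μ) : IsOptimal Φ D ν :=
  ⟨hν, fun ρ hρ hρv => hc.trans (hμ.2 ρ hρ (hρv.trans hv))⟩

lemma exists_isOptimal {μ₀ : Multiset (A × ℕ)} (hμ₀ : IsMultiExpansion D μ₀) :
    ∃ μ, IsOptimal Φ D μ ∧ mvalue Φ μ = mvalue Φ μ₀ := by
  classical
  have hex : ∃ n, ∃ μ, IsMultiExpansion D μ ∧ mvalue Φ μ = mvalue Φ μ₀ ∧ Multiset.card μ = n :=
    ⟨_, μ₀, hμ₀, rfl, rfl⟩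
  obtain ⟨μ, hμ, hv, hc⟩ := Nat.find_spec hex
  refine ⟨μ, ⟨hμ, fun ρ hρ hρv => ?_⟩, hv⟩
  exact hc ▸ Nat.find_min' hex ⟨ρ, hρ, hρv.trans hv, rfl⟩

end Multi

section Bound

variable {A : Type*} [AddCommGroup A] {Φ : AddMonoid.End A} {D : Finset A}

lemma exists_bound_of_isOptimal
    (hInt : (⋂ m : ℕ, Set.range (Φ ^ m : AddMonoid.End A)) = {0}) (k : ℕ) (y : A) :
    ∃ B, ∀ s, IsOptimal Φ D s → mvalue Φ s = y → Multiset.card s = k → ∀ p ∈ s, p.2 ≤ B := by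
  induction k generalizing y with
  | zero => exact ⟨0, fun s _ _ hk p hp => by simp [Multiset.card_eq_zero.1 hk] at hp⟩
  | succ k ih =>
    by_cases hy : y = 0
    · refine ⟨0, fun s hs hsy hk => ?_⟩
      have := hs.2 0 (by simp [IsMultiExpansion]) (by simp [hsy, hy])
      simp [hk] at this
    obtain ⟨N, hN⟩ : ∃ N, y ∉ Set.range (Φ ^ N : AddMonoid.End A) := by
      by_contra! h
      have hy' : y ∈ ⋂ m : ℕ, Set.range (Φ ^ m : AddMonoid.End A) := Set.mem_iInter.2 h
      exact hy (by rwa [hInt] at hy')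
    choose B hB using fun q : A × ℕ => ih (y - (Φ ^ q.2) q.1)
    refine ⟨max N ((D ×ˢ Finset.range N).sup B), fun s hs hsy hk p hp => ?_⟩
    -- some digit sits below `N`, since otherwise `y ∈ range Φ^N`
    obtain ⟨p₀, hp₀, hp₀N⟩ : ∃ p₀ ∈ s, p₀.2 < N := by
      by_contra! h
      exact hN (hsy ▸ mvalue_mem_range_pow Φ h)
    obtain ⟨s, rfl⟩ := Multiset.exists_cons_of_mem hp₀
    rcases Multiset.mem_cons.1 hp with rfl | hp
    · exact le_max_of_le_left hp₀N.le
    · have hmem : p₀ ∈ D ×ˢ Finset.range N :=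
        Finset.mem_product.2 ⟨(hs.1 p₀ (Multiset.mem_cons_self _ _)).1, Finset.mem_range.2 hp₀N⟩
      have hle := hB p₀ _ hs.of_cons (by rw [← hsy, mvalue_cons]; abel) (by simpa using hk) p hp
      exact le_max_of_le_right (hle.trans (Finset.le_sup hmem))

lemma exists_isOptimal_forall_posSum_le
    (hInt : (⋂ m : ℕ, Set.range (Φ ^ m : AddMonoid.End A)) = {0})
    {μ₀ : Multiset (A × ℕ)} (hμ₀ : IsOptimal Φ D μ₀) :
    ∃ μ, IsOptimal Φ D μ ∧ mvalue Φ μ = mvalue Φ μ₀ ∧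
      ∀ ν, IsOptimal Φ D ν → mvalue Φ ν = mvalue Φ μ₀ → posSum ν ≤ posSum μ := by
  obtain ⟨B, hB⟩ := exists_bound_of_isOptimal hInt (Multiset.card μ₀) (mvalue Φ μ₀)
  set S := {t | ∃ ν, IsOptimal Φ D ν ∧ mvalue Φ ν = mvalue Φ μ₀ ∧ posSum ν = t}
  have hbdd : BddAbove S := by
    refine ⟨Multiset.card μ₀ * B, ?_⟩
    rintro _ ⟨ν, hν, hνv, rfl⟩
    have hc := hν.card_eq hμ₀ hνv
    have := Multiset.sum_le_card_nsmul (ν.map Prod.snd) B fun b hb => by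
      obtain ⟨p, hp, rfl⟩ := Multiset.mem_map.1 hb
      exact hB ν hν hνv hc p hp
    simpa [posSum, hc] using this
  obtain ⟨μ, hμ, hμv, hμs⟩ := Nat.sSup_mem (⟨_, μ₀, hμ₀, rfl, rfl⟩ : S.Nonempty) hbdd
  exact ⟨μ, hμ, hμv, fun ν hν hνv => hμs ▸ le_csSup hbdd ⟨ν, hν, hνv, rfl⟩⟩

end Bound

section Expansion

variable {A : Type*} [AddCommGroup A] {Φ : AddMonoid.End A} {D : Finset A}

lemma evalue_add (f g : ℕ →₀ A) : evalue Φ (f + g) = evalue Φ f + evalue Φ g :=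
  Finsupp.sum_add_index' (fun _ => map_zero _) (fun _ => map_add _)

lemma evalue_single (n : ℕ) (d : A) : evalue Φ (Finsupp.single n d) = (Φ ^ n) d :=
  Finsupp.sum_single_index (map_zero _)

noncomputable def toExpansion (μ : Multiset (A × ℕ)) : ℕ →₀ A :=
  (μ.map fun p => Finsupp.single p.2 p.1).sum

@[simp] lemma toExpansion_cons (p : A × ℕ) (μ : Multiset (A × ℕ)) :
    toExpansion (p ::ₘ μ) = Finsupp.single p.2 p.1 + toExpansion μ := by
  simp [toExpansion]

lemma evalue_toExpansion (μ : Multiset (A × ℕ)) : evalue Φ (toExpansion μ) = mvalue Φ μ := by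
  induction μ using Multiset.induction_on with
  | empty => simp [toExpansion, evalue]
  | cons p μ ih => rw [toExpansion_cons, evalue_add, evalue_single, mvalue_cons, ih]

lemma eweight_toExpansion_le (μ : Multiset (A × ℕ)) :
    eweight (toExpansion μ) ≤ Multiset.card μ := by
  classical
  induction μ using Multiset.induction_on with
  | empty => simp [toExpansion, eweight]
  | cons p μ ih =>
    have hsingle : (Finsupp.single p.2 p.1).support.card ≤ 1 :=
      (Finset.card_le_card Finsupp.support_single_subset).trans (by simp)
    have := (Finset.card_le_card (Finsupp.support_add (g₁ := Finsupp.single p.2 p.1)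
      (g₂ := toExpansion μ))).trans (Finset.card_union_le _ _)
    rw [eweight, toExpansion_cons, Multiset.card_cons]
    exact this.trans (by rw [eweight] at ih; omega)

lemma toExpansion_apply_eq_zero {μ : Multiset (A × ℕ)} {n : ℕ} (h : ∀ p ∈ μ, p.2 ≠ n) :
    toExpansion μ n = 0 := by
  induction μ using Multiset.induction_on with
  | empty => simp [toExpansion]
  | cons p μ ih =>
    rw [toExpansion_cons, Finsupp.add_apply, Finsupp.single_eq_of_ne' (h p (by simp)),
      ih fun q hq => h q (Multiset.mem_cons_of_mem hq), add_zero]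

open Classical in
def IsSpaced (k : ℕ) (μ : Multiset (A × ℕ)) : Prop :=
  ∀ p ∈ μ, ∀ q ∈ μ.erase p, p.2 ≤ q.2 → p.2 + k ≤ q.2

lemma IsSpaced.toExpansion_apply {k : ℕ} {μ : Multiset (A × ℕ)} (hk : 0 < k)
    (hs : IsSpaced k μ) {p : A × ℕ} (hp : p ∈ μ) : toExpansion μ p.2 = p.1 := by
  classical
  rw [← Multiset.cons_erase hp, toExpansion_cons, Finsupp.add_apply, Finsupp.single_eq_same,
    toExpansion_apply_eq_zero, add_zero]
  intro q hq hqp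
  have := hs p hp q hq hqp.ge
  omega

lemma exists_expansion_of_isSpaced (h0 : (0 : A) ∈ D) {k : ℕ} (hk : 0 < k)
    {μ : Multiset (A × ℕ)} (hμ : IsMultiExpansion D μ) (hs : IsSpaced k μ) :
    ∃ η, IsExpansion D η ∧ IsWNAF k η ∧ evalue Φ η = mvalue Φ μ ∧
      eweight η ≤ Multiset.card μ := by
  have hsupp : ∀ n, toExpansion μ n ≠ 0 → ∃ p ∈ μ, p.2 = n := fun n hn => by
    by_contra! h
    exact hn (toExpansion_apply_eq_zero h)
  refine ⟨toExpansion μ, fun n => ?_, fun m n hmn hm hn => ?_, evalue_toExpansion μ,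
    eweight_toExpansion_le μ⟩
  · by_cases h : ∃ p ∈ μ, p.2 = n
    · obtain ⟨p, hp, rfl⟩ := h
      rw [hs.toExpansion_apply hk hp]
      exact (hμ p hp).1
    · push Not at h
      rw [toExpansion_apply_eq_zero h]
      exact h0
  · classical
    obtain ⟨p, hp, rfl⟩ := hsupp m hm
    obtain ⟨q, hq, rfl⟩ := hsupp n hn
    have hne : q ≠ p := fun h => hmn (h ▸ rfl)
    rcases le_total p.2 q.2 with h | h
    · have := hs p hp q ((Multiset.mem_erase_of_ne hne).2 hq) h
      exact le_abs.2 (Or.inr (by omega))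
    · have := hs q hq p ((Multiset.mem_erase_of_ne hne.symm).2 hp) h
      exact le_abs.2 (Or.inl (by omega))

end Expansion

section Replacement

variable {A : Type*} [AddCommGroup A] {Φ : AddMonoid.End A} {D : Finset A}

lemma IsMultiExpansion.add {s t : Multiset (A × ℕ)} (hs : IsMultiExpansion D s)
    (ht : IsMultiExpansion D t) : IsMultiExpansion D (s + t) :=
  fun p hp => (Multiset.mem_add.1 hp).elim (hs p) (ht p)

def shiftedMulti (m : ℕ) (η : ℕ →₀ A) : Multiset (A × ℕ) :=
  η.support.val.map fun n => (η n, m + n)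

lemma IsExpansion.isMultiExpansion_shiftedMulti {η : ℕ →₀ A} (hη : IsExpansion D η) (m : ℕ) :
    IsMultiExpansion D (shiftedMulti m η) := by
  intro p hp
  obtain ⟨n, hn, rfl⟩ := Multiset.mem_map.1 hp
  exact ⟨hη n, Finsupp.mem_support_iff.1 hn⟩

lemma mvalue_shiftedMulti (m : ℕ) (η : ℕ →₀ A) :
    mvalue Φ (shiftedMulti m η) = (Φ ^ m) (evalue Φ η) := by
  simp only [mvalue, shiftedMulti, Multiset.map_map, Function.comp_def, pow_add_apply]
  rw [evalue, Finsupp.sum, map_sum]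
  rfl

lemma card_shiftedMulti (m : ℕ) (η : ℕ →₀ A) :
    Multiset.card (shiftedMulti m η) = eweight η := by
  simp [shiftedMulti, eweight]

lemma posSum_shiftedMulti (m : ℕ) (η : ℕ →₀ A) :
    posSum (shiftedMulti m η) = eweight η * m + ∑ n ∈ η.support, n := by
  simp only [posSum, shiftedMulti, eweight, Multiset.map_map, Function.comp_def]
  rw [← Finset.sum_eq_multiset_sum, Finset.sum_add_distrib, Finset.sum_const, smul_eq_mul,
    mul_comm]

lemma IsWNAF.le_sum_support {w : ℕ} {η : ℕ →₀ A} (hη : IsWNAF w η) (h : 2 ≤ eweight η) :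
    w ≤ ∑ n ∈ η.support, n := by
  obtain ⟨a, ha, b, hb, hab⟩ := Finset.one_lt_card.1 h
  have hsum : a + b ≤ ∑ n ∈ η.support, n :=
    calc a + b = ∑ n ∈ {a, b}, n := (Finset.sum_pair (f := fun n => n) hab).symm
      _ ≤ ∑ n ∈ η.support, n :=
        Finset.sum_le_sum_of_subset (by simp [Finset.insert_subset_iff, ha, hb])
  rcases le_abs.1 (hη a b hab (Finsupp.mem_support_iff.1 ha) (Finsupp.mem_support_iff.1 hb))
    with h | h <;> omega

lemma IsOptimal.exists_posSum_lt_of_not_isSpaced {w : ℕ} (hweak : WWeakSubadditive Φ D w)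
    {μ : Multiset (A × ℕ)} (hμ : IsOptimal Φ D μ) (hs : ¬ IsSpaced (w - 1) μ) :
    ∃ ν, IsOptimal Φ D ν ∧ mvalue Φ ν = mvalue Φ μ ∧ posSum μ < posSum ν := by
  classical
  simp only [IsSpaced, not_forall, not_le] at hs
  obtain ⟨p, hp, q, hq, hpq, hclose⟩ := hs
  rw [← Multiset.cons_erase hp, ← Multiset.cons_erase hq] at hμ ⊢
  set rest := (μ.erase p).erase q
  have hpD := hμ.1 p (by simp)
  have hqD := hμ.1 q (by simp)
  -- shifting by `p.2` keeps every new digit at a position `≥ p.2`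
  obtain ⟨η, hηD, hηw, hηv, hη2⟩ := hweak p.1 hpD.1 q.1 hqD.1 hpD.2 hqD.2 0 (q.2 - p.2)
    (by omega)
  set ν := rest + shiftedMulti p.2 η
  have hνD : IsMultiExpansion D ν :=
    (hμ.1.of_le ((Multiset.le_cons_self _ _).trans (Multiset.le_cons_self _ _))).add
      (hηD.isMultiExpansion_shiftedMulti p.2)
  have hνv : mvalue Φ ν = mvalue Φ (p ::ₘ q ::ₘ rest) := by
    simp only [ν, mvalue_add, mvalue_shiftedMulti, hηv, mvalue_cons, map_add, ← pow_add_apply,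
      add_zero, Nat.add_sub_cancel' hpq]
    abel
  have hη : eweight η = 2 := by
    have := hμ.2 ν hνD hνv
    simp only [ν, Multiset.card_cons, Multiset.card_add, card_shiftedMulti] at this
    omega
  refine ⟨ν, hμ.of_card_le hνD hνv (by simp [ν, card_shiftedMulti, hη]), hνv, ?_⟩
  have := hηw.le_sum_support hη.ge
  simp only [ν, posSum_add, posSum_cons, posSum_shiftedMulti, hη]
  omega

end Replacement

theorem weak_subadditive_optimal_general {A : Type*} [AddCommGroup A]
    (Φ : AddMonoid.End A) (D : Finset A) (h0 : (0 : A) ∈ D)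
    (hInt : (⋂ m : ℕ, Set.range (Φ ^ m : AddMonoid.End A)) = {0})
    (w : ℕ) (hw : 2 ≤ w)
    (hweak : WWeakSubadditive Φ D w) :
    ∀ z : A, (∃ μ : Multiset (A × ℕ), IsMultiExpansion D μ ∧ mvalue Φ μ = z) →
      ∃ η : ℕ →₀ A, IsExpansion D η ∧ IsWNAF (w - 1) η ∧ evalue Φ η = z ∧
        ∀ μ : Multiset (A × ℕ), IsMultiExpansion D μ → mvalue Φ μ = z →
          eweight η ≤ Multiset.card μ := by
  rintro z ⟨μ₀, hμ₀, rfl⟩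
  obtain ⟨μ₁, hμ₁, hv₁⟩ := exists_isOptimal (Φ := Φ) hμ₀
  obtain ⟨μ, hμ, hv, hmax⟩ := exists_isOptimal_forall_posSum_le hInt hμ₁
  have hspaced : IsSpaced (w - 1) μ := by
    by_contra h
    obtain ⟨ν, hν, hνv, hlt⟩ := hμ.exists_posSum_lt_of_not_isSpaced hweak h
    exact (hmax ν hν (hνv.trans hv)).not_gt hlt
  obtain ⟨η, hηD, hηw, hηv, hηc⟩ := exists_expansion_of_isSpaced h0 (by omega) hμ.1 hspaced
  refine ⟨η, hηD, hηw, hηv.trans (hv.trans hv₁), fun ρ hρ hρv => hηc.trans ?_⟩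
  exact hμ.2 ρ hρ (hρv.trans (hv.trans hv₁).symm)

/-- If the digit set is `w`-weak-subadditive, then every element with a
multi-expansion has an optimal `(w-1)`-NAF-expansion. -/
theorem weak_subadditive_optimal {A : Type*} [AddCommGroup A]
    (Φ : AddMonoid.End A) (D : Finset A) (h0 : (0 : A) ∈ D)
    (hD : ∀ d ∈ D, d ≠ 0 → d ∉ Set.range Φ)
    (hInt : (⋂ m : ℕ, Set.range (Φ ^ m : AddMonoid.End A)) = {0})
    (w : ℕ) (hw : 2 ≤ w)
    (hweak : WWeakSubadditive Φ D w) :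
    ∀ z : A, (∃ μ : Multiset (A × ℕ), IsMultiExpansion D μ ∧ mvalue Φ μ = z) →
      ∃ η : ℕ →₀ A, IsExpansion D η ∧ IsWNAF (w - 1) η ∧ evalue Φ η = z ∧
        ∀ μ : Multiset (A × ℕ), IsMultiExpansion D μ → mvalue Φ μ = z →
          eweight η ≤ Multiset.card μ :=
  weak_subadditive_optimal_general Φ D h0 hInt w hw hweak
end

section
/- Let q ≥ 3 be an odd integer, τ = i·√q, and let w ≥ 3 be an odd integer. Set A := (q^{(w+1)/2} − 1)/2 (a rational integer), B := τ·(1 − q^{(w−1)/2})/2 (an element of ℤ[τ]), C := −A, t := (q+1)/2 and s := (−1)^{(w+1)/2}. Then: (a) 1 and −1 are minimal norm representatives modulo τ^w; (b) A − τ is a minimal norm representative modulo τ^w; (c) s·C is a minimal norm representative modulo τ^w; (d) −B − 1 is a minimal norm representative modulo τ^w; (e) s·C − t·τ^{w−1} is a minimal norm representative modulo τ^w; (f) in ℤ[τ] the identity (A − τ)·τ^{w−1} + s·C = s·τ^{2w} + (−B − 1)·τ^w + (s·C − t·τ^{w−1}) holds. -/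
open Complex

noncomputable section

/-- The lattice `ℤ[τ] = {a + b·τ : a, b ∈ ℤ}` as a subset of `ℂ`. -/
def Ztau (τ : ℂ) : Set ℂ := {z | ∃ a b : ℤ, z = (a : ℂ) + (b : ℂ) * τ}

/-- `z` is divisible by `τ` in `ℤ[τ]`. -/
def TauDvd (τ : ℂ) (z : ℂ) : Prop := ∃ y ∈ Ztau τ, z = τ * y

/-- `x` is a minimal norm representative modulo `τ^w`: an element of `ℤ[τ]`,
not divisible by `τ`, of minimal norm in its residue class modulo `τ^w`. -/
def MinNormRep (τ : ℂ) (w : ℕ) (x : ℂ) : Prop :=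
  x ∈ Ztau τ ∧ ¬ TauDvd τ x ∧
    ∀ y ∈ Ztau τ, ‖x‖ ≤ ‖x - τ ^ w * y‖

/-- `τ = i·√q`. -/
def tau0 (q : ℤ) : ℂ := I * (Real.sqrt q : ℂ)

/-- `A = (q^{(w+1)/2} − 1)/2`. -/
def A19 (q : ℤ) (w : ℕ) : ℂ := ((q : ℂ) ^ ((w + 1) / 2) - 1) / 2

/-- `B = τ·(1 − q^{(w−1)/2})/2`. -/
def B19 (q : ℤ) (w : ℕ) : ℂ := tau0 q * (1 - (q : ℂ) ^ ((w - 1) / 2)) / 2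

/-- `C = −A`. -/
def C19 (q : ℤ) (w : ℕ) : ℂ := -(A19 q w)

/-- `t = (q+1)/2`. -/
def t19 (q : ℤ) : ℂ := ((q : ℂ) + 1) / 2

/-- `s = (−1)^{(w+1)/2}`. -/
def s19 (w : ℕ) : ℂ := (-1) ^ ((w + 1) / 2)

/-!
Write `w = 2m + 1`. Since `τ² = -q`, we have `τ^w = (-q)^m τ`, so subtracting a multiple
`τ^w (a + bτ)` from `c + dτ` changes `c` by a multiple of `q^(m+1)` and `d` by a multiple of `q^m`.
As `‖c + dτ‖² = c² + q d²`, every `c + dτ` with `2|c| ≤ q^(m+1)` and `2|d| ≤ q^m` has minimal norm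
in its class, and it is prime to `τ` as soon as `q ∤ c`. Writing `q^(m+1) = 2k + 1` and
`q^m = 2l + 1`, the elements (a)–(e) are `±1`, `k - τ`, `±k`, `-1 + lτ` and `∓(l + 1)`, all within
these bounds. The identity (f) only uses `τ² = -q`.
-/

theorem sq_le_sq_sub_mul_of_two_mul_abs_le {R : Type*} [CommRing R] [LinearOrder R]
    [IsStrictOrderedRing R] {c M : R} (hc : 2 * |c| ≤ M) (k : ℤ) :
    c ^ 2 ≤ (c - M * k) ^ 2 := by
  rcases eq_or_ne k 0 with rfl | hk
  · simp
  have hM : 2 * |c| ≤ |M * k| := by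
    have h1 : (1 : R) ≤ |(k : R)| := by exact_mod_cast Int.one_le_abs hk
    have hM0 : 0 ≤ M := le_trans (by positivity) hc
    rw [abs_mul, abs_of_nonneg hM0]
    nlinarith [mul_le_mul_of_nonneg_left h1 hM0]
  have h2 : 2 * (c * (M * k)) ≤ |M * k| ^ 2 := by
    calc 2 * (c * (M * k)) ≤ 2 * |c| * |M * k| := by
          rw [mul_assoc, ← abs_mul]; gcongr; exact le_abs_self _
      _ ≤ |M * k| * |M * k| := by gcongr
      _ = |M * k| ^ 2 := (sq _).symm
  rw [sq_abs] at h2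
  linear_combination h2

section tau0

variable {q : ℤ}

theorem tau0_sq (hq : 0 ≤ q) : tau0 q ^ 2 = -q := by
  rw [tau0, mul_pow, I_sq, ← ofReal_pow, Real.sq_sqrt (by exact_mod_cast hq)]
  push_cast
  ring

theorem tau0_pow_two_mul_add_one (hq : 0 ≤ q) (m : ℕ) :
    tau0 q ^ (2 * m + 1) = (-q : ℂ) ^ m * tau0 q := by
  rw [pow_succ, pow_mul, tau0_sq hq]

theorem re_intCast_add_intCast_mul_tau0 (c d : ℤ) : ((c : ℂ) + d * tau0 q).re = c := by
  simp [tau0]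

theorem norm_sq_intCast_add_intCast_mul_tau0 (hq : 0 ≤ q) (c d : ℤ) :
    ‖(c : ℂ) + d * tau0 q‖ ^ 2 = (c : ℝ) ^ 2 + q * (d : ℝ) ^ 2 := by
  have hsqrt : Real.sqrt q * Real.sqrt q = q := Real.mul_self_sqrt (by exact_mod_cast hq)
  rw [Complex.sq_norm, Complex.normSq_apply]
  simp only [tau0, add_re, add_im, mul_re, mul_im, intCast_re, intCast_im, I_re, I_im,
    ofReal_re, ofReal_im]
  linear_combination (d : ℝ) ^ 2 * hsqrt

theorem not_tauDvd_tau0 (hq : 0 ≤ q) {c : ℤ} (hc : ¬ q ∣ c) (d : ℤ) :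
    ¬ TauDvd (tau0 q) ((c : ℂ) + d * tau0 q) := by
  rintro ⟨_, ⟨a, b, rfl⟩, h⟩
  have h' : (c : ℂ) + d * tau0 q = ((-q * b : ℤ) : ℂ) + a * tau0 q := by
    rw [h]; push_cast; linear_combination (b : ℂ) * tau0_sq hq
  have := congrArg Complex.re h'
  rw [re_intCast_add_intCast_mul_tau0, re_intCast_add_intCast_mul_tau0] at this
  exact hc ⟨-b, by rw [Int.cast_inj.mp this]; ring⟩

theorem minNormRep_tau0_of_two_mul_abs_le (hq : 0 ≤ q) {m : ℕ} {c d : ℤ}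
    (hc : 2 * |c| ≤ q ^ (m + 1)) (hd : 2 * |d| ≤ q ^ m) (hcq : ¬ q ∣ c) :
    MinNormRep (tau0 q) (2 * m + 1) ((c : ℂ) + d * tau0 q) := by
  refine ⟨⟨c, d, rfl⟩, not_tauDvd_tau0 hq hcq d, ?_⟩
  rintro _ ⟨a, b, rfl⟩
  have hsub : (c : ℂ) + d * tau0 q - tau0 q ^ (2 * m + 1) * (a + b * tau0 q)
      = ((c + (-1) ^ m * q ^ (m + 1) * b : ℤ) : ℂ)
        + ((d - (-1) ^ m * q ^ m * a : ℤ) : ℂ) * tau0 q := by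
    rw [tau0_pow_two_mul_add_one hq]
    push_cast
    linear_combination (-(-(q : ℂ)) ^ m * b) * tau0_sq hq
  rw [hsub, ← sq_le_sq₀ (norm_nonneg _) (norm_nonneg _),
    norm_sq_intCast_add_intCast_mul_tau0 hq, norm_sq_intCast_add_intCast_mul_tau0 hq]
  have hc' := sq_le_sq_sub_mul_of_two_mul_abs_le (R := ℝ) (c := c) (M := q ^ (m + 1))
    (by exact_mod_cast hc) (-((-1) ^ m * b))
  have hd' := sq_le_sq_sub_mul_of_two_mul_abs_le (R := ℝ) (c := d) (M := q ^ m)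
    (by exact_mod_cast hd) ((-1) ^ m * a)
  push_cast at hc' hd' ⊢
  have hqR : (0 : ℝ) ≤ q := by exact_mod_cast hq
  linarith [mul_le_mul_of_nonneg_left hd' hqR]

theorem minNormRep_tau0_intCast (hq : 0 ≤ q) {m : ℕ} {c : ℤ} (hc : 2 * |c| ≤ q ^ (m + 1))
    (hcq : ¬ q ∣ c) : MinNormRep (tau0 q) (2 * m + 1) (c : ℂ) := by
  simpa using minNormRep_tau0_of_two_mul_abs_le (d := 0) hq hc (by simp; positivity) hcq

end tau0

theorem neg_mem_Ztau {τ z : ℂ} (hz : z ∈ Ztau τ) : -z ∈ Ztau τ := by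
  obtain ⟨a, b, rfl⟩ := hz
  exact ⟨-a, -b, by push_cast; ring⟩

theorem MinNormRep.neg {τ : ℂ} {w : ℕ} {x : ℂ} (h : MinNormRep τ w x) :
    MinNormRep τ w (-x) := by
  obtain ⟨hx, hnd, hmin⟩ := h
  refine ⟨neg_mem_Ztau hx,
    fun ⟨y, hy, hxy⟩ => hnd ⟨-y, neg_mem_Ztau hy, by linear_combination -hxy⟩, fun y hy => ?_⟩
  calc ‖-x‖ = ‖x‖ := norm_neg x
    _ ≤ ‖x - τ ^ w * -y‖ := hmin _ (neg_mem_Ztau hy)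
    _ = ‖-x - τ ^ w * y‖ := by rw [← norm_neg]; ring_nf

theorem MinNormRep.neg_one_pow_mul {τ : ℂ} {w : ℕ} {x : ℂ} (h : MinNormRep τ w x) (n : ℕ) :
    MinNormRep τ w ((-1) ^ n * x) := by
  rcases neg_one_pow_eq_or ℂ n with hn | hn <;> simp [hn, h, h.neg]

theorem not_dvd_of_dvd_two_mul_add {q c e : ℤ} (hq : 1 < q) (he : IsUnit e)
    (h : q ∣ 2 * c + e) : ¬ q ∣ c := fun hc => by
  have hqe : IsUnit q := isUnit_of_dvd_unit ((dvd_add_right (hc.mul_left 2)).mp h) he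
  rcases Int.isUnit_iff.mp hqe with rfl | rfl <;> omega

section construction

variable {q k l : ℤ} {m : ℕ}

theorem A19_eq (hk : q ^ (m + 1) = 2 * k + 1) : A19 q (2 * m + 1) = k := by
  have hkC : (q : ℂ) ^ (m + 1) = 2 * k + 1 := by exact_mod_cast hk
  rw [A19, show (2 * m + 1 + 1) / 2 = m + 1 by omega, hkC]
  ring

theorem B19_eq (hl : q ^ m = 2 * l + 1) : B19 q (2 * m + 1) = -l * tau0 q := by
  have hlC : (q : ℂ) ^ m = 2 * l + 1 := by exact_mod_cast hl
  rw [B19, show (2 * m + 1 - 1) / 2 = m by omega, hlC]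
  ring

theorem s19_mul_C19_eq (hk : q ^ (m + 1) = 2 * k + 1) :
    s19 (2 * m + 1) * C19 q (2 * m + 1) = (-1) ^ m * k := by
  rw [s19, C19, A19_eq hk, show (2 * m + 1 + 1) / 2 = m + 1 by omega, pow_succ]
  ring

theorem s19_mul_C19_sub_t19_mul_eq (hq : 0 ≤ q) (hk : q ^ (m + 1) = 2 * k + 1)
    (hl : q ^ m = 2 * l + 1) :
    s19 (2 * m + 1) * C19 q (2 * m + 1) - t19 q * tau0 q ^ (2 * m + 1 - 1)
      = (-1) ^ m * -((l + 1 : ℤ) : ℂ) := by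
  have hkC : (q : ℂ) ^ (m + 1) = 2 * k + 1 := by exact_mod_cast hk
  have hlC : (q : ℂ) ^ m = 2 * l + 1 := by exact_mod_cast hl
  rw [s19_mul_C19_eq hk, t19, show 2 * m + 1 - 1 = 2 * m by omega, pow_mul, tau0_sq hq, neg_pow]
  push_cast
  linear_combination -(-1 : ℂ) ^ m / 2 * (hkC + hlC)

theorem nonopt_construction_identity (hq : 0 ≤ q) (m : ℕ) :
    (A19 q (2 * m + 1) - tau0 q) * tau0 q ^ (2 * m + 1 - 1) + s19 (2 * m + 1) * C19 q (2 * m + 1)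
      = s19 (2 * m + 1) * tau0 q ^ (2 * (2 * m + 1))
        + (-(B19 q (2 * m + 1)) - 1) * tau0 q ^ (2 * m + 1)
        + (s19 (2 * m + 1) * C19 q (2 * m + 1) - t19 q * tau0 q ^ (2 * m + 1 - 1)) := by
  rw [A19, B19, s19, t19, show (2 * m + 1 + 1) / 2 = m + 1 by omega,
    show (2 * m + 1 - 1) / 2 = m by omega, show 2 * m + 1 - 1 = 2 * m by omega,
    tau0_pow_two_mul_add_one hq, pow_mul, pow_mul, tau0_sq hq, Odd.neg_pow ⟨m, rfl⟩]
  unfold C19 A19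
  linear_combination (1 - (q : ℂ) ^ m) / 2 * (-(q : ℂ)) ^ m * tau0_sq hq

theorem minNormRep_one (hq : 2 ≤ q) : MinNormRep (tau0 q) (2 * m + 1) 1 := by
  have : q ≤ q ^ (m + 1) := le_self_pow₀ (by omega) m.succ_ne_zero
  simpa using minNormRep_tau0_intCast (c := 1) (m := m) (by omega) (by simp; omega)
    (fun h => by have := Int.le_of_dvd one_pos h; omega)

theorem minNormRep_A19_sub_tau0 (hq : 2 ≤ q) (hm : 1 ≤ m) (hk : q ^ (m + 1) = 2 * k + 1) :
    MinNormRep (tau0 q) (2 * m + 1) (A19 q (2 * m + 1) - tau0 q) := by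
  have : q ≤ q ^ m := le_self_pow₀ (by omega) (by omega)
  have : q ^ m ≤ q ^ (m + 1) := pow_le_pow_right₀ (by omega) m.le_succ
  rw [A19_eq hk, show (k : ℂ) - tau0 q = k + ((-1 : ℤ) : ℂ) * tau0 q by push_cast; ring]
  refine minNormRep_tau0_of_two_mul_abs_le (by omega) (by rw [abs_of_nonneg (by omega)]; omega)
    (by simp; omega) (not_dvd_of_dvd_two_mul_add (by omega) isUnit_one ?_)
  exact hk ▸ dvd_pow_self q m.succ_ne_zero

theorem minNormRep_s19_mul_C19 (hq : 2 ≤ q) (hk : q ^ (m + 1) = 2 * k + 1) :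
    MinNormRep (tau0 q) (2 * m + 1) (s19 (2 * m + 1) * C19 q (2 * m + 1)) := by
  have : 1 ≤ q ^ (m + 1) := one_le_pow₀ (by omega)
  rw [s19_mul_C19_eq hk]
  refine (minNormRep_tau0_intCast (by omega) (by rw [abs_of_nonneg (by omega)]; omega)
    (not_dvd_of_dvd_two_mul_add (by omega) isUnit_one ?_)).neg_one_pow_mul m
  exact hk ▸ dvd_pow_self q m.succ_ne_zero

theorem minNormRep_neg_B19_sub_one (hq : 2 ≤ q) (hl : q ^ m = 2 * l + 1) :
    MinNormRep (tau0 q) (2 * m + 1) (-(B19 q (2 * m + 1)) - 1) := by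
  have : 1 ≤ q ^ m := one_le_pow₀ (by omega)
  rw [B19_eq hl, show -(-(l : ℂ) * tau0 q) - 1 = ((-1 : ℤ) : ℂ) + l * tau0 q by push_cast; ring]
  exact (minNormRep_tau0_of_two_mul_abs_le (by omega) (by simp [pow_succ]; nlinarith)
    (by rw [abs_of_nonneg (by omega)]; omega)
    (by simpa using fun h => by have := Int.le_of_dvd one_pos h; omega))

theorem minNormRep_s19_mul_C19_sub_t19_mul (hq : 2 ≤ q) (hm : 1 ≤ m)
    (hk : q ^ (m + 1) = 2 * k + 1) (hl : q ^ m = 2 * l + 1) :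
    MinNormRep (tau0 q) (2 * m + 1)
      (s19 (2 * m + 1) * C19 q (2 * m + 1) - t19 q * tau0 q ^ (2 * m + 1 - 1)) := by
  have : 1 ≤ q ^ m := one_le_pow₀ (by omega)
  rw [s19_mul_C19_sub_t19_mul_eq (by omega) hk hl]
  refine (minNormRep_tau0_intCast (by omega) (by rw [abs_of_nonneg (by omega), pow_succ]; nlinarith)
    (not_dvd_of_dvd_two_mul_add (by omega) isUnit_one.neg ?_)).neg.neg_one_pow_mul m
  exact (show q ^ m = 2 * (l + 1) + -1 by omega) ▸ dvd_pow_self q (by omega)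

end construction

/-- The counter-example construction for `p = 0`, odd `q ≥ 3`, and odd
`w ≥ 3`: `A` is a rational integer, `B ∈ ℤ[τ]`, (a)–(e) the listed elements
are minimal norm representatives modulo `τ^w`, and (f) the stated identity
holds in `ℤ[τ]`. -/
theorem nonopt_construction_p0_q_odd (q : ℤ) (hq : 3 ≤ q) (hqo : Odd q)
    (w : ℕ) (hw : 3 ≤ w) (hwodd : Odd w) :
    (∃ a : ℤ, A19 q w = (a : ℂ)) ∧
    B19 q w ∈ Ztau (tau0 q) ∧
    (MinNormRep (tau0 q) w 1 ∧ MinNormRep (tau0 q) w (-1)) ∧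
    MinNormRep (tau0 q) w (A19 q w - tau0 q) ∧
    MinNormRep (tau0 q) w (s19 w * C19 q w) ∧
    MinNormRep (tau0 q) w (-(B19 q w) - 1) ∧
    MinNormRep (tau0 q) w (s19 w * C19 q w - t19 q * tau0 q ^ (w - 1)) ∧
    (A19 q w - tau0 q) * tau0 q ^ (w - 1) + s19 w * C19 q w
      = s19 w * tau0 q ^ (2 * w) + (-(B19 q w) - 1) * tau0 q ^ w
        + (s19 w * C19 q w - t19 q * tau0 q ^ (w - 1)) := by
  obtain ⟨m, rfl⟩ := hwodd
  obtain ⟨k, hk⟩ := hqo.pow (n := m + 1)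
  obtain ⟨l, hl⟩ := hqo.pow (n := m)
  have hq2 : 2 ≤ q := by omega
  have hm : 1 ≤ m := by omega
  exact ⟨⟨k, A19_eq hk⟩, ⟨0, -l, by simp [B19_eq hl]⟩,
    ⟨minNormRep_one hq2, (minNormRep_one hq2).neg⟩,
    minNormRep_A19_sub_tau0 hq2 hm hk, minNormRep_s19_mul_C19 hq2 hk,
    minNormRep_neg_B19_sub_one hq2 hl, minNormRep_s19_mul_C19_sub_t19_mul hq2 hm hk hl,
    nonopt_construction_identity (by omega) m⟩
end
end
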